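/- arXiv:2206.12096 — 2 statements merged into one kernel-verified Lean document; each statement's English description precedes it below -/
import Mathlib

section
/- Let K be a field of characteristic different from 2 and let A be a K-algebra satisfying anti-commutativity (xy = -yx) and anti-associativity (x(yz) = -(xy)z). Then every product of four elements vanishes: (xy)(zt) = 0 for all x, y, z, t ∈ A. -/
/-- Over a field of characteristic different from 2, an anti-commutative and anti-associative
algebra has all products of four elements equal to zero: `(xy)(zt) = 0`. -/
theorem anticomm_antiassoc_four_products_vanish
    {K : Type*} [Field K] (hchar : (2 : K) ≠ 0)
    {A : Type*} [NonUnitalNonAssocRing A] [Module K A]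
    [SMulCommClass K A A] [IsScalarTower K A A]
    (hanti : ∀ a b : A, a * b = -(b * a))
    (hassoc : ∀ a b c : A, a * (b * c) = -((a * b) * c)) :
    ∀ x y z t : A, (x * y) * (z * t) = 0 := by
  intro x y z t
  have e1 : (x * y) * z = -(x * (y * z)) := by rw [hassoc x y z, neg_neg]
  have e2 : (x * (y * z)) * t = -(x * ((y * z) * t)) := by
    rw [hassoc x (y * z) t, neg_neg]
  have e3 : (y * z) * t = -(y * (z * t)) := by rw [hassoc y z t, neg_neg]
  have key : (x * y) * (z * t) = -((x * y) * (z * t)) := by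
    calc (x * y) * (z * t) = -(((x * y) * z) * t) := hassoc _ _ _
      _ = (x * (y * z)) * t := by rw [e1, neg_mul, neg_neg]
      _ = x * (y * (z * t)) := by rw [e2, e3, mul_neg, neg_neg]
      _ = -((x * y) * (z * t)) := hassoc _ _ _
  have h2 : (2 : K) • ((x * y) * (z * t)) = 0 := by
    rw [two_smul]
    nth_rewrite 2 [key]
    abel
  have := congrArg (fun v => (2 : K)⁻¹ • v) h2
  simpa [smul_smul, inv_mul_cancel₀ hchar] using this
end

section
/- Let K be a field and V a homogeneous variety of K-algebras in which, for some scalars α₁,…,α₄ ∈ K, the identity (xy)z = α₁x(yz) + α₂x(zy) + α₃(yz)x + α₄(zy)x holds, together with commutativity xy = yx. Then V satisfies associativity: (xy)z = x(yz). -/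
/-- If a commutative algebra in a homogeneous variety of `K`-algebras satisfies the identity
`(xy)z = α₁ x(yz) + α₂ x(zy) + α₃ (yz)x + α₄ (zy)x`, then it is associative.  (Hence a
homogeneous variety of commutative `K`-algebras satisfying this identity satisfies
associativity.) -/
theorem comm_with_pullout_identity_implies_assoc
    {K : Type*} [Field K]
    {A : Type*} [NonUnitalNonAssocRing A] [Module K A]
    [SMulCommClass K A A] [IsScalarTower K A A]
    (a1 a2 a3 a4 : K)
    (hcomm : ∀ x y : A, x * y = y * x)
    (hid : ∀ x y z : A, (x * y) * z =
      a1 • (x * (y * z)) + a2 • (x * (z * y)) + a3 • ((y * z) * x) + a4 • ((z * y) * x)) :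
    ∀ x y z : A, (x * y) * z = x * (y * z) := by
  set l : K := a1 + a2 + a3 + a4 with hl
  have h : ∀ x y z : A, (x * y) * z = l • (x * (y * z)) := by
    intro x y z
    rw [hid x y z, hcomm z y, hcomm (y * z) x, hl]
    rw [← add_smul, ← add_smul, ← add_smul]
  by_cases hl0 : l = 0
  · intro x y z
    rw [h x y z, hl0, zero_smul, hcomm, h y z x, hl0, zero_smul]
  · have sym : ∀ x y z : A, x * (y * z) = y * (x * z) := by
      intro x y z
      apply smul_right_injective A hl0; show l • _ = l • _
      rw [← h x y z, ← h y x z, hcomm x y]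
    intro x y z
    rw [hcomm (x * y) z, sym z x y, hcomm z y]
end
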